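/- arXiv:2512.12118 — 3 statements merged into one kernel-verified Lean document; each statement's English description precedes it below -/
import Mathlib

section
/- For every A ≥ 0 there is a constant C = C(A) > 0 such that for all real T ≥ 2 and 1 ≤ M ≤ T, and all z = x + iy ∈ ℂ with |y| ≤ 1, one has |h_{T,M}(z)| ≤ C · ((1 + |x−T|/M)^{−A} + (1 + |x+T|/M)^{−A}). In particular h_{T,M} decays rapidly on the horizontal strip {|Im z| ≤ 1}. -/
/-!
On the strip `|Im w| ≤ 1` the Gaussian satisfies `|exp (-w²)| ≤ exp (1 - (Re w)²)`. With
`u = |x ∓ T| / M`, the hypothesis `M ≤ T` gives `|x| ≤ T (1 + u)`, so the rational prefactor of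
`h_{T,M}` is at most `2 (1 + u)²`. Gaussian decay beats every power:
`(1 + u)^B exp (-u²) ≤ exp (B u - u²) ≤ exp (B² / 4)`, applied with `B = 2 + A`.
-/

/-- The test function `h_{T,M}(z) = ((z² + 1/4)/(T² + 1/4)) ·
(exp(−((z−T)/M)²) + exp(−((z+T)/M)²))`. -/
noncomputable def hTM (T M : ℝ) (z : ℂ) : ℂ :=
  ((z ^ 2 + 1 / 4) / ((T : ℂ) ^ 2 + 1 / 4)) *
    (Complex.exp (-(((z - (T : ℂ)) / (M : ℂ)) ^ 2)) +
     Complex.exp (-(((z + (T : ℂ)) / (M : ℂ)) ^ 2)))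

open Real

lemma one_add_rpow_mul_exp_neg_sq_le {B t : ℝ} (hB : 0 ≤ B) (ht : -1 ≤ t) :
    (1 + t) ^ B * exp (-t ^ 2) ≤ exp (B ^ 2 / 4) := by
  have hpow : (1 + t) ^ B ≤ exp (B * t) := by
    calc (1 + t) ^ B ≤ exp t ^ B := by
          gcongr
          · linarith
          · linarith [add_one_le_exp t]
      _ = exp (B * t) := by rw [← exp_mul, mul_comm]
  calc (1 + t) ^ B * exp (-t ^ 2) ≤ exp (B * t) * exp (-t ^ 2) := by gcongr
    _ = exp (B * t - t ^ 2) := by rw [← exp_add, sub_eq_add_neg]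
    _ ≤ exp (B ^ 2 / 4) := by
        gcongr
        nlinarith [sq_nonneg (t - B / 2)]

lemma one_add_sq_mul_exp_one_sub_sq_le {A t : ℝ} (hA : -2 ≤ A) (ht : -1 < t) :
    (1 + t) ^ 2 * exp (1 - t ^ 2) ≤ exp (1 + (2 + A) ^ 2 / 4) * (1 + t) ^ (-A) := by
  have h1t : 0 < 1 + t := by linarith
  have hsplit : (1 + t) ^ 2 * exp (1 - t ^ 2)
      = exp 1 * ((1 + t) ^ (2 + A) * exp (-t ^ 2)) * (1 + t) ^ (-A) := by
    have hcancel : (1 + t) ^ A * (1 + t) ^ (-A) = 1 := by rw [← rpow_add h1t]; simp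
    rw [rpow_add h1t, rpow_two, sub_eq_add_neg, exp_add]
    linear_combination -(1 + t) ^ 2 * exp 1 * exp (-t ^ 2) * hcancel
  rw [hsplit, exp_add]
  gcongr
  exact one_add_rpow_mul_exp_neg_sq_le (by linarith) ht.le

lemma Complex.norm_exp_neg_sq (w : ℂ) : ‖exp (-w ^ 2)‖ = Real.exp (w.im ^ 2 - w.re ^ 2) := by
  rw [Complex.norm_exp]
  congr 1
  simp [pow_two]

lemma abs_le_abs_mul_one_add_abs_sub_div {x c M : ℝ} (hM : 0 < M) (hMc : M ≤ |c|) :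
    |x| ≤ |c| * (1 + |x - c| / M) := by
  have hcM : 1 ≤ |c| / M := (one_le_div hM).2 hMc
  calc |x| ≤ |c| + |x - c| := by simpa [add_comm] using abs_add_le (x - c) c
    _ ≤ |c| + |c| / M * |x - c| := by nlinarith [abs_nonneg (x - c)]
    _ = |c| * (1 + |x - c| / M) := by ring

lemma norm_sq_add_quarter_div_le {z : ℂ} {c s : ℝ} (hc : 1 ≤ |c|) (hs : 1 ≤ s)
    (hre : |z.re| ≤ |c| * s) (him : |z.im| ≤ 1) :
    ‖(z ^ 2 + 1 / 4) / ((c : ℂ) ^ 2 + 1 / 4)‖ ≤ 2 * s ^ 2 := by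
  have hden : ‖(c : ℂ) ^ 2 + 1 / 4‖ = c ^ 2 + 1 / 4 := by
    rw [show (c : ℂ) ^ 2 + 1 / 4 = ((c ^ 2 + 1 / 4 : ℝ) : ℂ) by push_cast; ring,
      Complex.norm_real, Real.norm_of_nonneg (by positivity)]
  have hnum : ‖z ^ 2 + 1 / 4‖ ≤ z.re ^ 2 + z.im ^ 2 + 1 / 4 := by
    calc ‖z ^ 2 + 1 / 4‖ ≤ ‖z ^ 2‖ + ‖(1 / 4 : ℂ)‖ := norm_add_le _ _
      _ = ‖z‖ ^ 2 + 1 / 4 := by norm_num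
      _ = z.re ^ 2 + z.im ^ 2 + 1 / 4 := by rw [Complex.sq_norm, Complex.normSq_apply]; ring
  rw [norm_div, hden, div_le_iff₀ (by positivity)]
  have hre2 : z.re ^ 2 ≤ c ^ 2 * s ^ 2 := by
    rw [← sq_abs z.re, ← sq_abs c, ← mul_pow]; gcongr
  have him2 : z.im ^ 2 ≤ 1 := by rw [← sq_abs]; nlinarith [abs_nonneg z.im]
  have hc2 : 1 ≤ c ^ 2 := by rw [← sq_abs]; nlinarith
  nlinarith

lemma norm_prefactor_mul_norm_exp_le {A M c : ℝ} {z : ℂ} (hA : -2 ≤ A) (hM : 1 ≤ M)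
    (hMc : M ≤ |c|) (him : |z.im| ≤ 1) :
    ‖(z ^ 2 + 1 / 4) / ((c : ℂ) ^ 2 + 1 / 4)‖ * ‖Complex.exp (-((z - c) / M) ^ 2)‖ ≤
      2 * exp (1 + (2 + A) ^ 2 / 4) * (1 + |z.re - c| / M) ^ (-A) := by
  set t := |z.re - c| / M
  have hM0 : 0 < M := by linarith
  have hpre : ‖(z ^ 2 + 1 / 4) / ((c : ℂ) ^ 2 + 1 / 4)‖ ≤ 2 * (1 + t) ^ 2 :=
    norm_sq_add_quarter_div_le (by linarith) (by linarith [show 0 ≤ t by positivity])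
      (abs_le_abs_mul_one_add_abs_sub_div hM0 hMc) him
  have hexp : ‖Complex.exp (-((z - c) / M) ^ 2)‖ ≤ exp (1 - t ^ 2) := by
    have hre : ((z - c) / M).re ^ 2 = t ^ 2 := by
      simp [t, Complex.div_ofReal_re, div_pow]
    have him' : ((z - c) / M).im ^ 2 ≤ 1 := by
      rw [sq_le_one_iff_abs_le_one, Complex.div_ofReal_im, abs_div, abs_of_pos hM0, div_le_one hM0]
      simpa using him.trans hM
    rw [Complex.norm_exp_neg_sq, hre]
    gcongr
  calc _ ≤ 2 * (1 + t) ^ 2 * exp (1 - t ^ 2) := by gcongr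
    _ ≤ 2 * (exp (1 + (2 + A) ^ 2 / 4) * (1 + t) ^ (-A)) := by
        rw [mul_assoc]
        gcongr 2 * ?_
        exact one_add_sq_mul_exp_one_sub_sq_le hA (by linarith [show 0 ≤ t by positivity])
    _ = _ := by ring

/-- For every `A ≥ 0` there is `C = C(A) > 0` such that for all `T ≥ 2`,
`1 ≤ M ≤ T`, and all `z = x + iy` with `|y| ≤ 1`:
`|h_{T,M}(z)| ≤ C · ((1 + |x−T|/M)^{−A} + (1 + |x+T|/M)^{−A})`. -/
theorem stmt_1 :
    ∀ A : ℝ, 0 ≤ A → ∃ C : ℝ, 0 < C ∧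
      ∀ T M x y : ℝ, 2 ≤ T → 1 ≤ M → M ≤ T → |y| ≤ 1 →
        ‖hTM T M (x + y * Complex.I)‖ ≤
          C * ((1 + |x - T| / M) ^ (-A) + (1 + |x + T| / M) ^ (-A)) := by
  intro A hA
  refine ⟨2 * exp (1 + (2 + A) ^ 2 / 4), by positivity, ?_⟩
  intro T M x y _ hM hMT hy
  set z : ℂ := x + y * Complex.I
  have him : |z.im| ≤ 1 := by simpa [z] using hy
  have hA2 : -2 ≤ A := by linarith
  have hright := norm_prefactor_mul_norm_exp_le (c := T) hA2 hM
    (by rwa [abs_of_nonneg (by linarith)]) him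
  have hleft := norm_prefactor_mul_norm_exp_le (c := -T) hA2 hM
    (by rwa [abs_neg, abs_of_nonneg (by linarith)]) him
  simp only [Complex.ofReal_neg, sub_neg_eq_add, neg_sq] at hleft
  have hre : z.re = x := by simp [z]
  rw [hre] at hright hleft
  unfold hTM
  calc _ ≤ ‖(z ^ 2 + 1 / 4) / ((T : ℂ) ^ 2 + 1 / 4)‖ *
        (‖Complex.exp (-((z - T) / M) ^ 2)‖ + ‖Complex.exp (-((z + T) / M) ^ 2)‖) := by
        rw [norm_mul]; gcongr; exact norm_add_le _ _
    _ ≤ 2 * exp (1 + (2 + A) ^ 2 / 4) * (1 + |x - T| / M) ^ (-A) +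
        2 * exp (1 + (2 + A) ^ 2 / 4) * (1 + |x + T| / M) ^ (-A) := by
        rw [mul_add]; exact add_le_add hright hleft
    _ = _ := by ring
end

section
/- There exist absolute constants c₁, c₂ > 0 such that for all real T ≥ 4 and 1 ≤ M ≤ T/2, one has c₁ · T·M ≤ ∫_ℝ |t · h_{T,M}(t)| dt ≤ c₂ · T·M. -/
/-!
On the real line `|t · h_{T,M}(t)|` is a cubic polynomial weight of size `≈ T` times two Gaussian
bumps of width `M` centred at `±T`. Below, the bump near `T` keeps the integrand `≥ e⁻¹ T` on
`[T, T + M]`, an interval of length `M`. Above, with `x = |t ∓ T| / M`, the weight is at most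
`8T(1 + x)³` because `M ≤ 2T`, and `(1 + x)³ e^{-x²} ≤ e^{9/2} e^{-x²/2}`; so the integrand is
dominated by `T` times two Gaussians of variance `M²`, each of integral `√(2π) M`.
-/

open MeasureTheory

open Real

lemma norm_ofReal_mul_hTM (T M t : ℝ) :
    ‖(t : ℂ) * hTM T M t‖ =
      |t| * ((t ^ 2 + 1 / 4) / (T ^ 2 + 1 / 4)) *
        (exp (-((t - T) / M) ^ 2) + exp (-((t + T) / M) ^ 2)) := by
  have h : (t : ℂ) * hTM T M t =
      ((t * ((t ^ 2 + 1 / 4) / (T ^ 2 + 1 / 4) *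
        (exp (-((t - T) / M) ^ 2) + exp (-((t + T) / M) ^ 2))) : ℝ) : ℂ) := by
    unfold hTM
    push_cast [Complex.ofReal_exp]
    ring
  rw [h, Complex.norm_real, norm_mul, Real.norm_eq_abs, Real.norm_of_nonneg (by positivity),
    mul_assoc]

lemma continuous_norm_ofReal_mul_hTM (T M : ℝ) :
    Continuous fun t : ℝ => ‖(t : ℂ) * hTM T M t‖ := by
  simp only [norm_ofReal_mul_hTM]
  fun_prop

lemma one_add_pow_three_mul_exp_neg_sq_le {x : ℝ} (hx : 0 ≤ x) :
    (1 + x) ^ 3 * exp (-x ^ 2) ≤ exp (9 / 2) * exp (-x ^ 2 / 2) := by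
  have hcube : (1 + x) ^ 3 ≤ exp (3 * x) := by
    rw [show 3 * x = (3 : ℕ) * x by norm_num, exp_nat_mul]
    exact pow_le_pow_left₀ (by linarith) (by linarith [add_one_le_exp x]) 3
  calc (1 + x) ^ 3 * exp (-x ^ 2) ≤ exp (3 * x) * exp (-x ^ 2) := by gcongr
    _ ≤ exp (9 / 2) * exp (-x ^ 2 / 2) := by
      rw [← exp_add, ← exp_add, exp_le_exp]
      nlinarith [sq_nonneg (x - 3)]

lemma abs_mul_weight_le {T M S : ℝ} (t : ℝ) (hT : 1 ≤ T) (hM : 0 < M) (hMT : M ≤ 2 * T)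
    (hS : |S| ≤ T) :
    |t| * ((t ^ 2 + 1 / 4) / (T ^ 2 + 1 / 4)) ≤ 8 * T * (1 + |t - S| / M) ^ 3 := by
  set x := |t - S| / M
  have hx : 0 ≤ x := by positivity
  have hMx : M * x = |t - S| := mul_div_cancel₀ _ hM.ne'
  have ht : |t| + 1 ≤ 2 * T * (1 + x) := by
    have : |t| ≤ |S| + |t - S| := by simpa using abs_add_le S (t - S)
    nlinarith [mul_le_mul_of_nonneg_right hMT hx]
  have hcube : (|t| + 1) ^ 3 ≤ (2 * T * (1 + x)) ^ 3 := pow_le_pow_left₀ (by positivity) ht 3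
  rw [mul_div_assoc', div_le_iff₀ (by positivity)]
  nlinarith [sq_abs t, abs_nonneg t, pow_nonneg (by positivity : (0 : ℝ) ≤ 1 + x) 3]

lemma abs_mul_weight_mul_exp_le {T M S : ℝ} (t : ℝ) (hT : 1 ≤ T) (hM : 0 < M)
    (hMT : M ≤ 2 * T) (hS : |S| ≤ T) :
    |t| * ((t ^ 2 + 1 / 4) / (T ^ 2 + 1 / 4)) * exp (-((t - S) / M) ^ 2) ≤
      8 * exp (9 / 2) * T * exp (-(2 * M ^ 2)⁻¹ * (t - S) ^ 2) := by
  set x := |t - S| / M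
  have hsq : ((t - S) / M) ^ 2 = x ^ 2 := by rw [div_pow, div_pow, sq_abs]
  have hsq' : -(2 * M ^ 2)⁻¹ * (t - S) ^ 2 = -x ^ 2 / 2 := by
    rw [div_pow, sq_abs]; field_simp
  rw [hsq, hsq']
  calc |t| * ((t ^ 2 + 1 / 4) / (T ^ 2 + 1 / 4)) * exp (-x ^ 2)
      ≤ 8 * T * ((1 + x) ^ 3 * exp (-x ^ 2)) :=
        (mul_le_mul_of_nonneg_right (abs_mul_weight_le t hT hM hMT hS) (exp_nonneg _)).trans_eq
          (mul_assoc _ _ _)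
    _ ≤ 8 * T * (exp (9 / 2) * exp (-x ^ 2 / 2)) :=
        mul_le_mul_of_nonneg_left (one_add_pow_three_mul_exp_neg_sq_le (by positivity))
          (by positivity)
    _ = 8 * exp (9 / 2) * T * exp (-x ^ 2 / 2) := by ring

lemma norm_ofReal_mul_hTM_le {T M : ℝ} (t : ℝ) (hT : 1 ≤ T) (hM : 0 < M) (hMT : M ≤ 2 * T) :
    ‖(t : ℂ) * hTM T M t‖ ≤ 8 * exp (9 / 2) * T *
      (exp (-(2 * M ^ 2)⁻¹ * (t - T) ^ 2) + exp (-(2 * M ^ 2)⁻¹ * (t - -T) ^ 2)) := by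
  have hT' : |T| ≤ T := (abs_of_nonneg (by linarith)).le
  have hplus := abs_mul_weight_mul_exp_le t hT hM hMT hT'
  have hminus := abs_mul_weight_mul_exp_le t hT hM hMT (S := -T) (by rwa [abs_neg])
  rw [sub_neg_eq_add] at hminus ⊢
  rw [norm_ofReal_mul_hTM]
  linarith

lemma integrable_exp_neg_mul_sq_sub {b : ℝ} (hb : 0 < b) (S : ℝ) :
    Integrable fun t : ℝ => exp (-b * (t - S) ^ 2) :=
  (integrable_exp_neg_mul_sq hb).comp_sub_right S

lemma integral_exp_neg_mul_sq_sub (b S : ℝ) :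
    ∫ t : ℝ, exp (-b * (t - S) ^ 2) = √(π / b) :=
  (integral_sub_right_eq_self (fun x => exp (-b * x ^ 2)) S).trans (integral_gaussian b)

lemma integrable_norm_ofReal_mul_hTM {T M : ℝ} (hT : 1 ≤ T) (hM : 0 < M) (hMT : M ≤ 2 * T) :
    Integrable fun t : ℝ => ‖(t : ℂ) * hTM T M t‖ := by
  have hb : 0 < (2 * M ^ 2)⁻¹ := by positivity
  refine Integrable.mono' (((integrable_exp_neg_mul_sq_sub hb T).add
      (integrable_exp_neg_mul_sq_sub hb (-T))).const_mul (8 * exp (9 / 2) * T))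
    (continuous_norm_ofReal_mul_hTM T M).aestronglyMeasurable (.of_forall fun t => ?_)
  rw [norm_norm]
  exact norm_ofReal_mul_hTM_le t hT hM hMT

lemma integral_norm_ofReal_mul_hTM_le {T M : ℝ} (hT : 1 ≤ T) (hM : 0 < M) (hMT : M ≤ 2 * T) :
    ∫ t : ℝ, ‖(t : ℂ) * hTM T M t‖ ≤ 48 * exp (9 / 2) * (T * M) := by
  have hb : 0 < (2 * M ^ 2)⁻¹ := by positivity
  have hsqrt : √(π / (2 * M ^ 2)⁻¹) ≤ 3 * M := by
    rw [sqrt_le_left (by positivity), div_inv_eq_mul]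
    nlinarith [pi_le_four]
  calc ∫ t : ℝ, ‖(t : ℂ) * hTM T M t‖
      ≤ ∫ t : ℝ, 8 * exp (9 / 2) * T *
          (exp (-(2 * M ^ 2)⁻¹ * (t - T) ^ 2) + exp (-(2 * M ^ 2)⁻¹ * (t - -T) ^ 2)) :=
        integral_mono (integrable_norm_ofReal_mul_hTM hT hM hMT)
          (((integrable_exp_neg_mul_sq_sub hb T).add
            (integrable_exp_neg_mul_sq_sub hb (-T))).const_mul _)
          fun t => norm_ofReal_mul_hTM_le t hT hM hMT
    _ = 8 * exp (9 / 2) * T * (2 * √(π / (2 * M ^ 2)⁻¹)) := by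
        rw [integral_const_mul, integral_add (integrable_exp_neg_mul_sq_sub hb T)
          (integrable_exp_neg_mul_sq_sub hb (-T)), integral_exp_neg_mul_sq_sub,
          integral_exp_neg_mul_sq_sub]
        ring
    _ ≤ 8 * exp (9 / 2) * T * (2 * (3 * M)) := by gcongr
    _ = 48 * exp (9 / 2) * (T * M) := by ring

lemma exp_neg_one_mul_le_norm_ofReal_mul_hTM {T M t : ℝ} (hT : 0 ≤ T) (hM : 0 < M)
    (ht : t ∈ Set.Icc T (T + M)) :
    exp (-1) * T ≤ ‖(t : ℂ) * hTM T M t‖ := by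
  obtain ⟨htT, htM⟩ := ht
  have habs : T ≤ |t| := by rw [abs_of_nonneg (by linarith)]; exact htT
  have hweight : 1 ≤ (t ^ 2 + 1 / 4) / (T ^ 2 + 1 / 4) :=
    (one_le_div (by positivity)).2 (by nlinarith)
  have hbump : exp (-1) ≤ exp (-((t - T) / M) ^ 2) + exp (-((t + T) / M) ^ 2) := by
    have h0 : 0 ≤ (t - T) / M := div_nonneg (by linarith) hM.le
    have h1 : (t - T) / M ≤ 1 := (div_le_one hM).2 (by linarith)
    refine le_add_of_le_of_nonneg (exp_le_exp.2 ?_) (exp_nonneg _)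
    nlinarith
  rw [norm_ofReal_mul_hTM, mul_assoc, mul_comm (exp (-1))]
  gcongr
  simpa using mul_le_mul hweight hbump (exp_nonneg _) (by positivity)

lemma mul_le_integral_norm_ofReal_mul_hTM {T M : ℝ} (hT : 1 ≤ T) (hM : 0 < M)
    (hMT : M ≤ 2 * T) :
    exp (-1) * (T * M) ≤ ∫ t : ℝ, ‖(t : ℂ) * hTM T M t‖ := by
  have hint := integrable_norm_ofReal_mul_hTM hT hM hMT
  have hvol : volume.real (Set.Icc T (T + M)) = M := by
    rw [Real.volume_real_Icc_of_le (by linarith), add_sub_cancel_left]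
  calc exp (-1) * (T * M) = exp (-1) * T * volume.real (Set.Icc T (T + M)) := by
        rw [hvol, mul_assoc]
    _ ≤ ∫ t in Set.Icc T (T + M), ‖(t : ℂ) * hTM T M t‖ :=
        setIntegral_ge_of_const_le_real measurableSet_Icc measure_Icc_lt_top.ne
          (fun t ht => exp_neg_one_mul_le_norm_ofReal_mul_hTM (by linarith) hM ht)
          hint.integrableOn
    _ ≤ ∫ t : ℝ, ‖(t : ℂ) * hTM T M t‖ :=
        setIntegral_le_integral hint (.of_forall fun _ => norm_nonneg _)

/-- There are absolute constants `c₁, c₂ > 0` such that for all `T ≥ 4` and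
`1 ≤ M ≤ T/2`: `c₁ · T·M ≤ ∫_ℝ |t · h_{T,M}(t)| dt ≤ c₂ · T·M`. -/
theorem stmt_3 :
    ∃ c₁ c₂ : ℝ, 0 < c₁ ∧ 0 < c₂ ∧
      ∀ T M : ℝ, 4 ≤ T → 1 ≤ M → M ≤ T / 2 →
        c₁ * (T * M) ≤ (∫ t : ℝ, ‖(t : ℂ) * hTM T M (t : ℂ)‖) ∧
        (∫ t : ℝ, ‖(t : ℂ) * hTM T M (t : ℂ)‖) ≤ c₂ * (T * M) := by
  refine ⟨exp (-1), 48 * exp (9 / 2), exp_pos _, by positivity, fun T M hT hM hMT => ?_⟩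
  have hT' : 1 ≤ T := by linarith
  have hM' : 0 < M := by linarith
  have hMT' : M ≤ 2 * T := by linarith
  exact ⟨mul_le_integral_norm_ofReal_mul_hTM hT' hM' hMT',
    integral_norm_ofReal_mul_hTM_le hT' hM' hMT'⟩
end

section
/- There exist absolute constants c₁, c₂ > 0 such that for all real T ≥ 4 and 1 ≤ M ≤ T/2, the diagonal Kuznetsov transform satisfies c₁ · T·M ≤ ℋ₀[h_{T,M}] ≤ c₂ · T·M, where ℋ₀[H] := (1/π) ∫_ℝ t · tanh(πt) · H(t) dt. -/
/-!
On the real line `h_{T,M}` is real, and the weight `t · tanh(πt)` is nonnegative and at most `|t|`.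
Writing `t = ±T + M u`, one has `|t| ≤ T (1 + |u|)` and, since `M ≤ T`,
`(t² + 1/4)/(T² + 1/4) ≤ (1 + |u|)²`, so each Gaussian bump contributes at most
`T M ∫ (1 + |u|)³ e^{-u²} du`. Conversely, on `[T, T + M]` we have `tanh(πt) ≥ 1/2`, the rational
factor is at least `1` and the bump at `T` is at least `e⁻¹`, so the integrand is at least `T/6`
on an interval of length `M`.
-/

open MeasureTheory

/-- The diagonal Kuznetsov transform `ℋ₀[H] := (1/π) ∫_ℝ t·tanh(πt)·H(t) dt`,
applied to (the restriction to ℝ of) a test function `H : ℂ → ℂ`. -/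
noncomputable def H0 (H : ℂ → ℂ) : ℂ :=
  (1 / (Real.pi : ℂ)) * ∫ t : ℝ, (t : ℂ) * (Real.tanh (Real.pi * t) : ℂ) * H (t : ℂ)

open Real

namespace Real

@[fun_prop]
theorem continuous_tanh : Continuous tanh := by
  simp_rw [funext tanh_eq_sinh_div_cosh]
  exact continuous_sinh.div continuous_cosh fun x ↦ (cosh_pos x).ne'

theorem tanh_nonneg {x : ℝ} (hx : 0 ≤ x) : 0 ≤ tanh x := by
  rw [tanh_eq_sinh_div_cosh]
  exact div_nonneg (sinh_nonneg_iff.mpr hx) (cosh_pos x).le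

theorem mul_tanh_mul_nonneg {c : ℝ} (hc : 0 ≤ c) (t : ℝ) : 0 ≤ t * tanh (c * t) := by
  rcases le_total 0 t with ht | ht
  · exact mul_nonneg ht (tanh_nonneg (mul_nonneg hc ht))
  · have h := tanh_nonneg (mul_nonneg hc (neg_nonneg.mpr ht))
    rw [mul_neg, tanh_neg] at h
    nlinarith

theorem mul_tanh_le_abs (t x : ℝ) : t * tanh x ≤ |t| :=
  calc t * tanh x ≤ |t| * |tanh x| := by rw [← abs_mul]; exact le_abs_self _
    _ ≤ |t| * 1 := by gcongr; exact (abs_tanh_lt_one x).le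
    _ = |t| := mul_one _

theorem one_half_le_tanh {x : ℝ} (hx : 1 ≤ x) : 1 / 2 ≤ tanh x := by
  have h2 : 2 ≤ exp x := by linarith [add_one_le_exp x]
  have hinv : exp x * exp (-x) = 1 := by rw [← exp_add, add_neg_cancel, exp_zero]
  rw [tanh_eq, le_div_iff₀ (by positivity)]
  nlinarith [exp_pos (-x)]

end Real

noncomputable def hTMReal (T M t : ℝ) : ℝ :=
  (t ^ 2 + 1 / 4) / (T ^ 2 + 1 / 4) * (exp (-((t - T) / M) ^ 2) + exp (-((t + T) / M) ^ 2))

theorem hTM_ofReal (T M t : ℝ) : hTM T M t = hTMReal T M t := by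
  simp only [hTM, hTMReal]
  push_cast
  ring_nf

theorem H0_eq_ofReal {H : ℂ → ℂ} {f : ℝ → ℝ} (hf : ∀ t : ℝ, H t = f t) :
    H0 H = (((∫ t, t * tanh (π * t) * f t) / π : ℝ) : ℂ) := by
  have hint : (fun t : ℝ ↦ (t : ℂ) * (tanh (π * t) : ℝ) * H t)
      = fun t ↦ ((t * tanh (π * t) * f t : ℝ) : ℂ) := by
    funext t
    rw [hf]
    push_cast
    rfl
  rw [H0, hint, integral_complex_ofReal]
  push_cast
  ring

noncomputable def cubicGauss (u : ℝ) : ℝ := (1 + |u|) ^ 3 * exp (-u ^ 2)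

theorem cubicGauss_nonneg (u : ℝ) : 0 ≤ cubicGauss u := by
  unfold cubicGauss; positivity

theorem integrable_cubicGauss : Integrable cubicGauss := by
  have hquartic : Integrable fun u : ℝ ↦ u ^ 4 * exp (-1 * u ^ 2) := by
    have hpow (u : ℝ) : u ^ (4 : ℝ) = u ^ 4 := by exact_mod_cast Real.rpow_natCast u 4
    simpa only [hpow] using integrable_rpow_mul_exp_neg_mul_sq one_pos (s := 4) (by norm_num)
  refine (((integrable_exp_neg_mul_sq one_pos).add hquartic).const_mul 8).mono'
    (by unfold cubicGauss; fun_prop) (.of_forall fun u ↦ ?_)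
  have hcube : (1 + |u|) ^ 3 ≤ 8 * (1 + u ^ 4) := by
    nlinarith [sq_abs u, abs_nonneg u, sq_nonneg (|u| - 1), sq_nonneg (|u| ^ 2 - 1)]
  rw [Real.norm_of_nonneg (cubicGauss_nonneg u), cubicGauss]
  simp only [Pi.add_apply, neg_one_mul]
  nlinarith [exp_pos (-u ^ 2)]

theorem integral_cubicGauss_pos : 0 < ∫ u, cubicGauss u := by
  rw [integral_pos_iff_support_of_nonneg cubicGauss_nonneg integrable_cubicGauss]
  have hsupp : Function.support cubicGauss = Set.univ :=
    Set.eq_univ_of_forall fun u ↦ (by unfold cubicGauss; positivity : 0 < cubicGauss u).ne'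
  rw [hsupp, Real.volume_univ]
  exact ENNReal.zero_lt_top

theorem integrable_cubicGauss_comp_sub_div (s M : ℝ) (hM : M ≠ 0) :
    Integrable fun t ↦ cubicGauss ((t - s) / M) :=
  (integrable_cubicGauss.comp_div hM).comp_sub_right s

theorem integral_cubicGauss_comp_sub_div (s M : ℝ) :
    ∫ t, cubicGauss ((t - s) / M) = |M| * ∫ u, cubicGauss u := by
  rw [integral_sub_right_eq_self (fun t ↦ cubicGauss (t / M)), Measure.integral_comp_div,
    smul_eq_mul]

theorem abs_mul_gaussian_le_cubicGauss {T M s : ℝ} (hM : 0 < M) (hMT : M ≤ T) (hs : |s| = T)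
    (t : ℝ) :
    |t| * ((t ^ 2 + 1 / 4) / (T ^ 2 + 1 / 4) * exp (-((t - s) / M) ^ 2)) ≤
      T * cubicGauss ((t - s) / M) := by
  have hT : 0 ≤ T := by linarith
  set u := (t - s) / M with hu
  have ht : t = s + M * u := by rw [hu]; field_simp; ring
  have habs : |t| ≤ T * (1 + |u|) := by
    calc |t| ≤ |s| + M * |u| := by
          rw [ht]; simpa [abs_mul, abs_of_pos hM] using abs_add_le s (M * u)
      _ ≤ T * (1 + |u|) := by rw [hs]; nlinarith [abs_nonneg u]
  have hratio : (t ^ 2 + 1 / 4) / (T ^ 2 + 1 / 4) ≤ (1 + |u|) ^ 2 := by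
    rw [div_le_iff₀ (by positivity)]
    have hsq : t ^ 2 ≤ (T * (1 + |u|)) ^ 2 := by
      rw [← sq_abs t]; exact pow_le_pow_left₀ (abs_nonneg t) habs 2
    nlinarith [abs_nonneg u]
  calc |t| * ((t ^ 2 + 1 / 4) / (T ^ 2 + 1 / 4) * exp (-u ^ 2))
      ≤ (T * (1 + |u|)) * ((1 + |u|) ^ 2 * exp (-u ^ 2)) := by gcongr
    _ = T * cubicGauss u := by rw [cubicGauss]; ring

section Integrand

variable {T M : ℝ}

theorem mul_tanh_mul_hTMReal_nonneg (t : ℝ) : 0 ≤ t * tanh (π * t) * hTMReal T M t :=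
  mul_nonneg (mul_tanh_mul_nonneg pi_pos.le t) (by unfold hTMReal; positivity)

theorem mul_tanh_mul_hTMReal_le (hM : 0 < M) (hMT : M ≤ T) (t : ℝ) :
    t * tanh (π * t) * hTMReal T M t ≤
      T * cubicGauss ((t - T) / M) + T * cubicGauss ((t - -T) / M) := by
  have hT : 0 ≤ T := by linarith
  have hminus := abs_mul_gaussian_le_cubicGauss hM hMT (abs_of_nonneg hT) t
  have hplus := abs_mul_gaussian_le_cubicGauss hM hMT (by rw [abs_neg, abs_of_nonneg hT]) t
  rw [sub_neg_eq_add] at hplus ⊢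
  calc t * tanh (π * t) * hTMReal T M t ≤ |t| * hTMReal T M t :=
        mul_le_mul_of_nonneg_right (mul_tanh_le_abs t _) (by unfold hTMReal; positivity)
    _ = _ := by unfold hTMReal; ring
    _ ≤ _ := add_le_add hminus hplus

theorem integrable_mul_tanh_mul_hTMReal (hM : 0 < M) (hMT : M ≤ T) :
    Integrable fun t ↦ t * tanh (π * t) * hTMReal T M t := by
  refine (((integrable_cubicGauss_comp_sub_div T M hM.ne').const_mul T).add
    ((integrable_cubicGauss_comp_sub_div (-T) M hM.ne').const_mul T)).mono'
    (by unfold hTMReal; fun_prop) (.of_forall fun t ↦ ?_)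
  rw [Real.norm_of_nonneg (mul_tanh_mul_hTMReal_nonneg t)]
  exact mul_tanh_mul_hTMReal_le hM hMT t

theorem integral_mul_tanh_mul_hTMReal_le (hM : 0 < M) (hMT : M ≤ T) :
    ∫ t, t * tanh (π * t) * hTMReal T M t ≤ 2 * (T * M) * ∫ u, cubicGauss u := by
  have hminus := (integrable_cubicGauss_comp_sub_div T M hM.ne').const_mul T
  have hplus := (integrable_cubicGauss_comp_sub_div (-T) M hM.ne').const_mul T
  have hmajorant := integral_mono_of_nonneg (.of_forall mul_tanh_mul_hTMReal_nonneg)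
    (hminus.add hplus) (.of_forall (mul_tanh_mul_hTMReal_le hM hMT))
  rw [Pi.add_def, integral_add hminus hplus, integral_const_mul, integral_const_mul,
    integral_cubicGauss_comp_sub_div, integral_cubicGauss_comp_sub_div, abs_of_pos hM]
    at hmajorant
  linarith

theorem le_mul_tanh_mul_hTMReal (hT : 1 ≤ T) (hM : 0 < M) {t : ℝ}
    (ht : t ∈ Set.Icc T (T + M)) :
    T / 6 ≤ t * tanh (π * t) * hTMReal T M t := by
  obtain ⟨hTt, htM⟩ := ht
  have htanh : T / 2 ≤ t * tanh (π * t) := by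
    have := one_half_le_tanh (x := π * t) (by nlinarith [pi_gt_three])
    nlinarith
  have hratio : 1 ≤ (t ^ 2 + 1 / 4) / (T ^ 2 + 1 / 4) := by
    rw [le_div_iff₀ (by positivity)]; nlinarith
  have hgauss : exp (-1) ≤ exp (-((t - T) / M) ^ 2) := by
    gcongr
    rw [div_pow, div_le_one (by positivity)]
    nlinarith
  have hbump : exp (-1) ≤ hTMReal T M t := by
    unfold hTMReal
    nlinarith [exp_pos (-((t + T) / M) ^ 2), exp_pos (-1)]
  nlinarith [exp_neg_one_gt_d9]

theorem le_integral_mul_tanh_mul_hTMReal (hT : 1 ≤ T) (hM : 0 < M) (hMT : M ≤ T) :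
    T * M / 6 ≤ ∫ t, t * tanh (π * t) * hTMReal T M t := by
  have hint := integrable_mul_tanh_mul_hTMReal hM hMT
  calc T * M / 6 = T / 6 * volume.real (Set.Icc T (T + M)) := by
        rw [Real.volume_real_Icc_of_le (by linarith)]; ring
    _ ≤ ∫ t in Set.Icc T (T + M), t * tanh (π * t) * hTMReal T M t :=
        setIntegral_ge_of_const_le_real measurableSet_Icc measure_Icc_lt_top.ne
          (fun t ht ↦ le_mul_tanh_mul_hTMReal hT hM ht) hint.integrableOn
    _ ≤ ∫ t, t * tanh (π * t) * hTMReal T M t :=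
        setIntegral_le_integral hint (.of_forall mul_tanh_mul_hTMReal_nonneg)

end Integrand

/-- There are absolute constants `c₁, c₂ > 0` such that for all `T ≥ 4` and
`1 ≤ M ≤ T/2`: `c₁ · T·M ≤ ℋ₀[h_{T,M}] ≤ c₂ · T·M` (the transform is real, so
the inequalities are stated for its real part, and its imaginary part vanishes). -/
theorem stmt_4 :
    ∃ c₁ c₂ : ℝ, 0 < c₁ ∧ 0 < c₂ ∧
      ∀ T M : ℝ, 4 ≤ T → 1 ≤ M → M ≤ T / 2 →
        (H0 (hTM T M)).im = 0 ∧
        c₁ * (T * M) ≤ (H0 (hTM T M)).re ∧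
        (H0 (hTM T M)).re ≤ c₂ * (T * M) := by
  refine ⟨1 / 24, ∫ u, cubicGauss u, by norm_num, integral_cubicGauss_pos,
    fun T M hT hM1 hMT ↦ ?_⟩
  have hM : 0 < M := by linarith
  have hTM_pos : 0 < T * M := mul_pos (by linarith) hM
  have hlower := le_integral_mul_tanh_mul_hTMReal (T := T) (by linarith) hM (by linarith)
  have hupper := integral_mul_tanh_mul_hTMReal_le (T := T) hM (by linarith)
  rw [H0_eq_ofReal (hTM_ofReal T M), Complex.ofReal_im, Complex.ofReal_re]
  refine ⟨rfl, ?_, ?_⟩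
  · rw [le_div_iff₀ pi_pos]
    nlinarith [mul_le_mul_of_nonneg_left pi_le_four hTM_pos.le]
  · rw [div_le_iff₀ pi_pos]
    nlinarith [mul_lt_mul_of_pos_left pi_gt_three (mul_pos integral_cubicGauss_pos hTM_pos)]
end
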